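/- arXiv:1403.3154 — 2 statements merged into one kernel-verified Lean document; each statement's English description precedes it below -/
import Mathlib

section
/- For smooth functions ρ > 0, μ, and a smooth vector field u on ℝ^d with div u = 0, the identity div(ρ^{-1} div(2μ Au)) = -div(2μ ∇(ρ^{-1}) · Au) holds, where Au = (1/2)(∇u - Du) is the antisymmetric gradient. -/
open MeasureTheory

noncomputable section

/-- Euclidean space `ℝ^d`. -/
abbrev Ed (d : ℕ) := EuclideanSpace ℝ (Fin d)

/-- The partial derivative `∂_i f (x)` of a scalar function. -/
def pderiv' {d : ℕ} (i : Fin d) (f : Ed d → ℝ) (x : Ed d) : ℝ :=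
  fderiv ℝ f x (EuclideanSpace.single i 1)

/-- The matrix `(∇v)_{ij}(x) = ∂_i v^j (x)` of a vector field. -/
def gradMat {d : ℕ} (v : Ed d → Ed d) (x : Ed d) (i j : Fin d) : ℝ :=
  pderiv' i (fun y => v y j) x

/-- The antisymmetric gradient `(Au)_{ij} = (1/2)(∂_i u^j - ∂_j u^i)`. -/
def antisymGrad {d : ℕ} (u : Ed d → Ed d) (x : Ed d) (i j : Fin d) : ℝ :=
  (1/2 : ℝ) * (gradMat u x i j - gradMat u x j i)

lemma pderiv_smooth {d : ℕ} {f : Ed d → ℝ} (hf : ContDiff ℝ (⊤ : ℕ∞) f) (i : Fin d) :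
    ContDiff ℝ (⊤ : ℕ∞) (pderiv' i f) := by
  have h : pderiv' i f = fun x =>
      (ContinuousLinearMap.apply ℝ ℝ (EuclideanSpace.single i (1:ℝ))) (fderiv ℝ f x) := rfl
  rw [h]
  exact (ContinuousLinearMap.apply ℝ ℝ _).contDiff.comp (hf.fderiv_right (m := ((⊤ : ℕ∞) : WithTop ℕ∞)) (by rw [← WithTop.coe_one, ← WithTop.coe_add, top_add]))

lemma pderiv_neg {d : ℕ} (f : Ed d → ℝ) (i : Fin d) (x : Ed d) :
    pderiv' i (fun y => -f y) x = -pderiv' i f x := by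
  unfold pderiv'; rw [fderiv_fun_neg]; simp

lemma pderiv_mul {d : ℕ} {f g : Ed d → ℝ} {x : Ed d}
    (hf : DifferentiableAt ℝ f x) (hg : DifferentiableAt ℝ g x) (i : Fin d) :
    pderiv' i (fun y => f y * g y) x = pderiv' i f x * g x + f x * pderiv' i g x := by
  unfold pderiv'
  rw [fderiv_fun_mul hf hg]
  simp [mul_comm, add_comm]

lemma pderiv_sum {d : ℕ} {ι : Type*} (s : Finset ι) {f : ι → Ed d → ℝ} {x : Ed d}
    (hf : ∀ k ∈ s, DifferentiableAt ℝ (f k) x) (i : Fin d) :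
    pderiv' i (fun y => ∑ k ∈ s, f k y) x = ∑ k ∈ s, pderiv' i (f k) x := by
  unfold pderiv'
  rw [fderiv_fun_sum hf]
  simp

lemma pderiv_comm {d : ℕ} {f : Ed d → ℝ} (hf : ContDiff ℝ (⊤ : ℕ∞) f) (i j : Fin d) (x : Ed d) :
    pderiv' i (pderiv' j f) x = pderiv' j (pderiv' i f) x := by
  have hsymm : IsSymmSndFDerivAt ℝ f x :=
    (hf.contDiffAt).isSymmSndFDerivAt (n := (⊤ : ℕ∞)) (by simp [minSmoothness_of_isRCLikeNormedField]; exact WithTop.coe_le_coe.mpr le_top)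
  have key : ∀ a b : Fin d, pderiv' a (pderiv' b f) x
      = fderiv ℝ (fderiv ℝ f) x (EuclideanSpace.single a 1) (EuclideanSpace.single b 1) := by
    intro a b
    unfold pderiv'
    have hd : DifferentiableAt ℝ (fderiv ℝ f) x :=
      ((hf.fderiv_right (m := 1) (WithTop.coe_le_coe.mpr le_top)).differentiable one_ne_zero).differentiableAt
    have h : (fun y => fderiv ℝ f y (EuclideanSpace.single b 1))
        = fun y => (fderiv ℝ f y) ((fun _ : Ed d => EuclideanSpace.single b (1:ℝ)) y) := rfl
    rw [h, fderiv_clm_apply hd (differentiableAt_const _)]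
    simp
  rw [key i j, key j i, hsymm]

lemma key_identity {d : ℕ} (r : Ed d → ℝ) (F : Fin d → Fin d → Ed d → ℝ)
    (hr : ContDiff ℝ (⊤ : ℕ∞) r) (hF : ∀ i j, ContDiff ℝ (⊤ : ℕ∞) (F i j))
    (hFanti : ∀ i j z, F j i z = -(F i j z)) (x : Ed d) :
    ∑ i, pderiv' i (fun y => r y * ∑ j, pderiv' j (F i j) y) x
      = -(∑ i, pderiv' i (fun y => ∑ j, pderiv' j r y * F i j y) x) := by
  classical
  have hTanti : ∀ i j : Fin d,
      pderiv' j (pderiv' i (F j i)) x = -pderiv' i (pderiv' j (F i j)) x := by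
    intro i j
    have h1 : pderiv' i (F j i) = fun y => -(pderiv' i (F i j) y) := by
      funext y
      rw [show F j i = fun z => -(F i j z) from funext (hFanti i j)]
      exact pderiv_neg (F i j) i y
    rw [h1, pderiv_neg (pderiv' i (F i j)) j x, pderiv_comm (hF i j) i j x]
  have hLi : ∀ i : Fin d,
      pderiv' i (fun y => r y * ∑ j, pderiv' j (F i j) y) x
        = pderiv' i r x * (∑ j, pderiv' j (F i j) x)
          + r x * ∑ j, pderiv' i (pderiv' j (F i j)) x := by
    intro i
    have hGc : ContDiff ℝ (⊤ : ℕ∞) (fun y => ∑ j, pderiv' j (F i j) y) :=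
      ContDiff.sum fun j _ => pderiv_smooth (hF i j) j
    rw [pderiv_mul ((hr.differentiable (by simp)) x) ((hGc.differentiable (by simp)) x) i,
        pderiv_sum Finset.univ (fun j _ => ((pderiv_smooth (hF i j) j).differentiable (by simp) x)) i]
  have hRi : ∀ i : Fin d,
      pderiv' i (fun y => ∑ j, pderiv' j r y * F i j y) x
        = ∑ j, (pderiv' i (pderiv' j r) x * F i j x + pderiv' j r x * pderiv' i (F i j) x) := by
    intro i
    rw [pderiv_sum Finset.univ (fun j _ =>
      (((pderiv_smooth hr j).mul (hF i j)).differentiable (by simp) x)) i]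
    exact Finset.sum_congr rfl fun j _ =>
      pderiv_mul ((pderiv_smooth hr j).differentiable (by simp) x)
        ((hF i j).differentiable (by simp) x) i
  have hzero1 : ∑ i, ∑ j, pderiv' i (pderiv' j (F i j)) x = 0 := by
    have h1 : (∑ i, ∑ j, pderiv' i (pderiv' j (F i j)) x)
        = ∑ i, ∑ j, pderiv' j (pderiv' i (F j i)) x := Finset.sum_comm
    have h2 : (∑ i, ∑ j, pderiv' j (pderiv' i (F j i)) x)
        = ∑ i, ∑ j, -pderiv' i (pderiv' j (F i j)) x :=
      Finset.sum_congr rfl fun i _ => Finset.sum_congr rfl fun j _ => hTanti i j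
    simp only [Finset.sum_neg_distrib] at h2
    have := h1.trans h2
    linarith
  have hzero2 : ∑ i, ∑ j, pderiv' i (pderiv' j r) x * F i j x = 0 := by
    have h1 : (∑ i, ∑ j, pderiv' i (pderiv' j r) x * F i j x)
        = ∑ i, ∑ j, pderiv' j (pderiv' i r) x * F j i x := Finset.sum_comm
    have h2 : (∑ i, ∑ j, pderiv' j (pderiv' i r) x * F j i x)
        = ∑ i, ∑ j, -(pderiv' i (pderiv' j r) x * F i j x) :=
      Finset.sum_congr rfl fun i _ => Finset.sum_congr rfl fun j _ => by
        rw [hFanti i j, pderiv_comm hr j i x]; ring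
    simp only [Finset.sum_neg_distrib] at h2
    have h3 := h1.trans h2
    linarith
  have hcross : ∑ i, ∑ j, pderiv' j r x * pderiv' i (F i j) x
      = -∑ i, ∑ j, pderiv' i r x * pderiv' j (F i j) x := by
    have h1 : (∑ i, ∑ j, pderiv' j r x * pderiv' i (F i j) x)
        = ∑ i, ∑ j, pderiv' i r x * pderiv' j (F j i) x := Finset.sum_comm
    have h2 : (∑ i, ∑ j, pderiv' i r x * pderiv' j (F j i) x)
        = ∑ i, ∑ j, -(pderiv' i r x * pderiv' j (F i j) x) :=
      Finset.sum_congr rfl fun i _ => Finset.sum_congr rfl fun j _ => by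
        rw [show F j i = fun z => -(F i j z) from funext (hFanti i j),
          pderiv_neg (F i j) j x]
        ring
    rw [h1, h2]
    simp only [Finset.sum_neg_distrib]
  calc ∑ i, pderiv' i (fun y => r y * ∑ j, pderiv' j (F i j) y) x
      = ∑ i, (pderiv' i r x * (∑ j, pderiv' j (F i j) x)
          + r x * ∑ j, pderiv' i (pderiv' j (F i j)) x) :=
        Finset.sum_congr rfl fun i _ => hLi i
    _ = (∑ i, ∑ j, pderiv' i r x * pderiv' j (F i j) x)
          + r x * ∑ i, ∑ j, pderiv' i (pderiv' j (F i j)) x := by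
        rw [Finset.sum_add_distrib, ← Finset.mul_sum]
        congr 1
        exact Finset.sum_congr rfl fun i _ => Finset.mul_sum _ _ _
    _ = ∑ i, ∑ j, pderiv' i r x * pderiv' j (F i j) x := by rw [hzero1]; ring
    _ = -(∑ i, pderiv' i (fun y => ∑ j, pderiv' j r y * F i j y) x) := by
        rw [show (∑ i, pderiv' i (fun y => ∑ j, pderiv' j r y * F i j y) x)
            = ∑ i, ∑ j, (pderiv' i (pderiv' j r) x * F i j x
                + pderiv' j r x * pderiv' i (F i j) x)
          from Finset.sum_congr rfl fun i _ => hRi i]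
        rw [show (∑ i, ∑ j, (pderiv' i (pderiv' j r) x * F i j x
                + pderiv' j r x * pderiv' i (F i j) x))
            = (∑ i, ∑ j, pderiv' i (pderiv' j r) x * F i j x)
              + ∑ i, ∑ j, pderiv' j r x * pderiv' i (F i j) x from by
            rw [← Finset.sum_add_distrib]
            exact Finset.sum_congr rfl fun i _ => Finset.sum_add_distrib]
        rw [hzero2, hcross]
        ring

/-- For smooth `ρ > 0`, `μ`, and a smooth divergence-free vector field `u` on `ℝ^d`,
`div(ρ⁻¹ div(2μ Au)) = -div(2μ ∇(ρ⁻¹) · Au)`, where `Au = (1/2)(∇u - Du)`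
and the divergence of a matrix is row-wise. -/
theorem div_rho_inv_div_viscosity {d : ℕ} (ρ μ : Ed d → ℝ) (u : Ed d → Ed d)
    (hρ : ContDiff ℝ (⊤ : ℕ∞) ρ) (hμ : ContDiff ℝ (⊤ : ℕ∞) μ) (hu : ContDiff ℝ (⊤ : ℕ∞) u)
    (hρpos : ∀ x, 0 < ρ x)
    (hdiv : ∀ x, ∑ i, gradMat u x i i = 0) (x : Ed d) :
    ∑ i, pderiv' i
        (fun y => (ρ y)⁻¹ * ∑ j, pderiv' j (fun z => 2 * μ z * antisymGrad u z i j) y) x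
      = -(∑ i, pderiv' i
        (fun y => 2 * μ y * ∑ j, pderiv' j (fun z => (ρ z)⁻¹) y * antisymGrad u y i j) x) := by
  classical
  have hρne : ∀ y, ρ y ≠ 0 := fun y => (hρpos y).ne'
  have hrinv : ContDiff ℝ (⊤ : ℕ∞) (fun y => (ρ y)⁻¹) := hρ.inv hρne
  have hcomp : ∀ j : Fin d, ContDiff ℝ (⊤ : ℕ∞) (fun y => u y j) := by
    intro j
    exact (EuclideanSpace.proj (𝕜 := ℝ) j).contDiff.comp hu
  have hF : ∀ i j : Fin d, ContDiff ℝ (⊤ : ℕ∞) (fun z => 2 * μ z * antisymGrad u z i j) := by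
    intro i j
    have h1 : ContDiff ℝ (⊤ : ℕ∞) (fun z => antisymGrad u z i j) := by
      simp only [antisymGrad, gradMat]
      exact contDiff_const.mul ((pderiv_smooth (hcomp j) i).sub (pderiv_smooth (hcomp i) j))
    exact (contDiff_const.mul hμ).mul h1
  have hFanti : ∀ (i j : Fin d) (z : Ed d),
      2 * μ z * antisymGrad u z j i = -(2 * μ z * antisymGrad u z i j) := by
    intro i j z
    simp only [antisymGrad]
    ring
  have hR : ∀ i : Fin d,
      (fun y => 2 * μ y * ∑ j, pderiv' j (fun z => (ρ z)⁻¹) y * antisymGrad u y i j)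
        = fun y => ∑ j, pderiv' j (fun z => (ρ z)⁻¹) y * (2 * μ y * antisymGrad u y i j) := by
    intro i
    funext y
    rw [Finset.mul_sum]
    exact Finset.sum_congr rfl fun j _ => by ring
  simp only [hR]
  exact key_identity (fun y => (ρ y)⁻¹) (fun i j z => 2 * μ z * antisymGrad u z i j)
    hrinv hF hFanti x

end
end

section
/- Gagliardo–Nirenberg inequality in dimension 2: there exists a constant C such that for all f in H¹(ℝ²), ‖f‖_{L⁴(ℝ²)} ≤ C ‖f‖_{L²(ℝ²)}^{1/2} ‖∇f‖_{L²(ℝ²)}^{1/2}. -/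
/-!
For compactly supported `g`, the Gagliardo–Nirenberg–Sobolev inequality
`‖u‖_{n/(n-1)} ≤ C ‖Du‖₁` applied to `u = g²`, together with `|D(g²)| = 2 |g| |Dg|` and
Cauchy–Schwarz, gives `‖g‖_{2n/(n-1)}² ≤ 2C ‖g‖₂ ‖Dg‖₂`; for `n = 2` this is the inequality.
A general `f` is the pointwise limit of `χₙ f`, where `χₙ = φ(·/(n+1))` for a fixed bump `φ`.
Since `|Dχₙ| = O(1/n)`, the right-hand sides for `χₙ f` tend to the one for `f`, and Fatou's
lemma carries the bound over to the limit.
-/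

open MeasureTheory Filter Module
open scoped ENNReal NNReal Topology

namespace ContDiffBump

variable {E : Type*} [NormedAddCommGroup E] [NormedSpace ℝ E] [HasContDiffBump E]
  (φ : ContDiffBump (0 : E))

noncomputable def dilate (n : ℕ) : E → ℝ := fun x => φ ((1 / ((n : ℝ) + 1)) • x)

theorem contDiff_dilate {k : ℕ∞} (n : ℕ) : ContDiff ℝ k (φ.dilate n) :=
  φ.contDiff.comp (contDiff_const_smul _)

theorem hasCompactSupport_dilate [FiniteDimensional ℝ E] (n : ℕ) :
    HasCompactSupport (φ.dilate n) :=
  φ.hasCompactSupport.comp_smul (by positivity)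

theorem norm_dilate_le_one (n : ℕ) (x : E) : ‖φ.dilate n x‖ ≤ 1 := by
  rw [dilate, Real.norm_of_nonneg φ.nonneg]
  exact φ.le_one

theorem tendsto_dilate (x : E) : Tendsto (fun n => φ.dilate n x) atTop (𝓝 1) := by
  have h0 : Tendsto (fun n : ℕ => (1 / ((n : ℝ) + 1)) • x) atTop (𝓝 0) := by
    simpa only [zero_smul] using (tendsto_one_div_add_atTop_nhds_zero_nat (𝕜 := ℝ)).smul_const x
  rw [← φ.one_of_mem_closedBall (Metric.mem_closedBall_self φ.rIn_pos.le)]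
  exact (φ.continuous.tendsto 0).comp h0

theorem exists_norm_fderiv_dilate_le [FiniteDimensional ℝ E] :
    ∃ K, ∀ (n : ℕ) (x : E), ‖fderiv ℝ (φ.dilate n) x‖ ≤ K / ((n : ℝ) + 1) := by
  obtain ⟨K, hK⟩ := (φ.hasCompactSupport.fderiv (𝕜 := ℝ)).exists_bound_of_continuous
    (φ.contDiff.continuous_fderiv one_ne_zero)
  refine ⟨K, fun n x => ?_⟩
  have hc : (0 : ℝ) ≤ 1 / ((n : ℝ) + 1) := by positivity
  calc ‖fderiv ℝ (φ.dilate n) x‖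
        = 1 / ((n : ℝ) + 1) * ‖fderiv ℝ φ ((1 / ((n : ℝ) + 1)) • x)‖ := by
        unfold dilate
        rw [fderiv_comp_smul (f := (φ : E → ℝ)), norm_smul, Real.norm_of_nonneg hc]
    _ ≤ K / ((n : ℝ) + 1) := by
        rw [one_div_mul_eq_div]
        gcongr
        exact hK _

end ContDiffBump

section Cutoff

variable {E : Type*} [NormedAddCommGroup E] [NormedSpace ℝ E]

theorem norm_fderiv_mul_le_of_norm_le_one {χ f : E → ℝ} {x : E} (hχ : DifferentiableAt ℝ χ x)
    (hf : DifferentiableAt ℝ f x) (hχ_le : ‖χ x‖ ≤ 1) :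
    ‖fderiv ℝ (fun y => χ y * f y) x‖ ≤ ‖fderiv ℝ f x‖ + ‖f x‖ * ‖fderiv ℝ χ x‖ := by
  rw [fderiv_fun_mul hχ hf]
  refine (norm_add_le _ _).trans ?_
  rw [norm_smul, norm_smul]
  gcongr
  exact mul_le_of_le_one_left (norm_nonneg _) hχ_le

variable [MeasurableSpace E] [OpensMeasurableSpace E] {μ : Measure E} {p : ℝ≥0∞}

theorem eLpNorm_fderiv_mul_le_of_norm_le_one {χ f : E → ℝ} {ε : ℝ} (hp : 1 ≤ p)
    (hχ : ContDiff ℝ 1 χ) (hf : ContDiff ℝ 1 f) (hχ_le : ∀ x, ‖χ x‖ ≤ 1)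
    (hχ' : ∀ x, ‖fderiv ℝ χ x‖ ≤ ε) :
    eLpNorm (fun x => ‖fderiv ℝ (fun y => χ y * f y) x‖) p μ
      ≤ eLpNorm (fun x => ‖fderiv ℝ f x‖) p μ + ENNReal.ofReal ε * eLpNorm f p μ := by
  have hε : 0 ≤ ε := (norm_nonneg _).trans (hχ' 0)
  calc eLpNorm (fun x => ‖fderiv ℝ (fun y => χ y * f y) x‖) p μ
      ≤ eLpNorm (fun x => ‖fderiv ℝ f x‖ + ε * ‖f x‖) p μ := by
        refine eLpNorm_mono_real fun x => ?_
        rw [norm_norm]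
        refine (norm_fderiv_mul_le_of_norm_le_one (hχ.differentiable one_ne_zero x)
          (hf.differentiable one_ne_zero x) (hχ_le x)).trans ?_
        rw [mul_comm ε]
        gcongr
        exact hχ' x
    _ ≤ eLpNorm (fun x => ‖fderiv ℝ f x‖) p μ + eLpNorm (fun x => ε * ‖f x‖) p μ :=
        eLpNorm_add_le (hf.continuous_fderiv one_ne_zero).norm.aestronglyMeasurable
          (continuous_const.mul hf.continuous.norm).aestronglyMeasurable hp
    _ = eLpNorm (fun x => ‖fderiv ℝ f x‖) p μ + ENNReal.ofReal ε * eLpNorm f p μ := by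
        rw [show (fun x => ε * ‖f x‖) = ε • fun x => ‖f x‖ from rfl, eLpNorm_const_smul,
          eLpNorm_norm f, Real.enorm_of_nonneg hε]

end Cutoff

section Density

variable {E : Type*} [NormedAddCommGroup E] [NormedSpace ℝ E] [FiniteDimensional ℝ E]
  [MeasurableSpace E] [BorelSpace E]

theorem eLpNorm_le_of_forall_hasCompactSupport (μ : Measure E) {q r : ℝ≥0∞} (hr : 1 ≤ r)
    {α β : ℝ} (hα : 0 ≤ α) (hβ : 0 ≤ β) {C : ℝ≥0∞} (hC : C ≠ ∞)
    (hcs : ∀ g : E → ℝ, ContDiff ℝ 1 g → HasCompactSupport g →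
      eLpNorm g q μ ≤ C * eLpNorm g r μ ^ α * eLpNorm (fun x => ‖fderiv ℝ g x‖) r μ ^ β)
    {f : E → ℝ} (hf : ContDiff ℝ 1 f) (hfr : eLpNorm f r μ ≠ ∞) :
    eLpNorm f q μ ≤ C * eLpNorm f r μ ^ α * eLpNorm (fun x => ‖fderiv ℝ f x‖) r μ ^ β := by
  let φ : ContDiffBump (0 : E) := default
  obtain ⟨K, hK⟩ := φ.exists_norm_fderiv_dilate_le
  set N := eLpNorm f r μ
  set D := eLpNorm (fun x => ‖fderiv ℝ f x‖) r μ
  let g (n : ℕ) (x : E) : ℝ := φ.dilate n x * f x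
  have hg_bound (n : ℕ) : eLpNorm (g n) q μ
      ≤ C * N ^ α * (D + ENNReal.ofReal (K / ((n : ℝ) + 1)) * N) ^ β := by
    refine (hcs _ ((φ.contDiff_dilate n).mul hf)
      ((φ.hasCompactSupport_dilate n).mul_right)).trans ?_
    gcongr
    · exact eLpNorm_mono fun x => by
        rw [norm_mul]
        exact mul_le_of_le_one_left (norm_nonneg _) (φ.norm_dilate_le_one n x)
    · exact eLpNorm_fderiv_mul_le_of_norm_le_one hr (φ.contDiff_dilate n) hf
        (φ.norm_dilate_le_one n) (hK n)
  have h_bound : Tendsto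
      (fun n : ℕ => C * N ^ α * (D + ENNReal.ofReal (K / ((n : ℝ) + 1)) * N) ^ β) atTop
      (𝓝 (C * N ^ α * D ^ β)) := by
    have hK0 : Tendsto (fun n : ℕ => ENNReal.ofReal (K / ((n : ℝ) + 1))) atTop (𝓝 0) := by
      simpa only [mul_one_div, mul_zero, ENNReal.ofReal_zero] using
        ENNReal.tendsto_ofReal (tendsto_one_div_add_atTop_nhds_zero_nat.const_mul K)
    have hD :
        Tendsto (fun n : ℕ => D + ENNReal.ofReal (K / ((n : ℝ) + 1)) * N) atTop (𝓝 D) := by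
      simpa using tendsto_const_nhds.add (ENNReal.Tendsto.mul_const hK0 (Or.inr hfr))
    exact ENNReal.Tendsto.const_mul ((ENNReal.continuous_rpow_const.tendsto D).comp hD)
      (Or.inr (ENNReal.mul_ne_top hC (ENNReal.rpow_ne_top_of_nonneg hα hfr)))
  calc eLpNorm f q μ ≤ atTop.liminf fun n => eLpNorm (g n) q μ :=
        Lp.eLpNorm_lim_le_liminf_eLpNorm
          (fun n => ((φ.contDiff_dilate (k := 0) n).continuous.mul
            hf.continuous).aestronglyMeasurable) f
          (ae_of_all _ fun x => by simpa using (φ.tendsto_dilate x).mul_const (f x))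
    _ ≤ atTop.liminf fun n : ℕ =>
          C * N ^ α * (D + ENNReal.ofReal (K / ((n : ℝ) + 1)) * N) ^ β :=
        liminf_le_liminf (Eventually.of_forall hg_bound)
    _ = C * N ^ α * D ^ β := h_bound.liminf_eq

end Density

section Sobolev

variable {E : Type*} [NormedAddCommGroup E] [NormedSpace ℝ E] [FiniteDimensional ℝ E]
  [MeasurableSpace E] [BorelSpace E] (μ : Measure E)

theorem eLpNorm_fderiv_mul_self_le {g : E → ℝ} (hg : ContDiff ℝ 1 g) :
    eLpNorm (fderiv ℝ fun x => g x * g x) 1 μ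
      ≤ 2 * eLpNorm g 2 μ * eLpNorm (fderiv ℝ g) 2 μ := by
  have hdg := hg.differentiable one_ne_zero
  have h_fderiv : fderiv ℝ (fun x => g x * g x) = fun x => (2 * g x) • fderiv ℝ g x := by
    ext1 x
    rw [fderiv_fun_mul (hdg x) (hdg x), two_mul, add_smul]
  rw [h_fderiv]
  refine eLpNorm_le_eLpNorm_mul_eLpNorm'_of_norm hg.continuous.aestronglyMeasurable
    (hg.continuous_fderiv one_ne_zero).aestronglyMeasurable (fun a L => (2 * a) • L) 2
    (ae_of_all _ fun x => ?_)
  simp [norm_smul, mul_assoc]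

variable [μ.IsAddHaarMeasure]

theorem eLpNorm_sq_le_eLpNorm_mul_eLpNorm_fderiv {g : E → ℝ} (hg : ContDiff ℝ 1 g)
    (h2g : HasCompactSupport g) {p : ℝ≥0} (hp : NNReal.HolderConjugate (finrank ℝ E) p) :
    eLpNorm g (p * 2) μ ^ 2
      ≤ 2 * eLpNormLESNormFDerivOneConst μ p * eLpNorm g 2 μ * eLpNorm (fderiv ℝ g) 2 μ := by
  have h_sq : eLpNorm (fun x => g x * g x) p μ = eLpNorm g (p * 2) μ ^ 2 := by
    simpa [Real.norm_eq_abs, sq_abs, ← sq] using eLpNorm_norm_rpow g (p := p) (μ := μ) two_pos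
  calc eLpNorm g (p * 2) μ ^ 2 = eLpNorm (fun x => g x * g x) p μ := h_sq.symm
    _ ≤ eLpNormLESNormFDerivOneConst μ p * eLpNorm (fderiv ℝ fun x => g x * g x) 1 μ :=
        eLpNorm_le_eLpNorm_fderiv_one μ (hg.mul hg) h2g.mul_right hp
    _ ≤ eLpNormLESNormFDerivOneConst μ p * (2 * eLpNorm g 2 μ * eLpNorm (fderiv ℝ g) 2 μ) := by
        gcongr
        exact eLpNorm_fderiv_mul_self_le μ hg
    _ = 2 * eLpNormLESNormFDerivOneConst μ p * eLpNorm g 2 μ * eLpNorm (fderiv ℝ g) 2 μ := by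
        ring

end Sobolev

/-- **Gagliardo–Nirenberg inequality in dimension 2**: there is a constant `C > 0` such that
for all `f ∈ H¹(ℝ²)` (here: `f` differentiable with `f ∈ L²` and `∇f ∈ L²`),
`‖f‖_{L⁴(ℝ²)} ≤ C ‖f‖_{L²(ℝ²)}^{1/2} ‖∇f‖_{L²(ℝ²)}^{1/2}`. -/
theorem gagliardo_nirenberg_2d :
    ∃ C : ℝ≥0∞, 0 < C ∧ C ≠ ∞ ∧
      ∀ f : EuclideanSpace ℝ (Fin 2) → ℝ,
        ContDiff ℝ 1 f →
        MemLp f 2 volume →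
        MemLp (fun x => ‖fderiv ℝ f x‖) 2 volume →
        eLpNorm f 4 volume
          ≤ C * eLpNorm f 2 volume ^ (1/2 : ℝ)
              * eLpNorm (fun x => ‖fderiv ℝ f x‖) 2 volume ^ (1/2 : ℝ) := by
  have hp : NNReal.HolderConjugate (finrank ℝ (EuclideanSpace ℝ (Fin 2))) 2 := by
    rw [finrank_euclideanSpace_fin]
    exact NNReal.HolderConjugate.two_two
  -- `+ 1` only makes the constant positive.
  let K := eLpNormLESNormFDerivOneConst (volume : Measure (EuclideanSpace ℝ (Fin 2))) 2
  refine ⟨(2 * K + 1) ^ (1 / 2 : ℝ), by positivity,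
    ENNReal.rpow_ne_top_of_nonneg (by norm_num) (by finiteness), fun f hf hf2 _ => ?_⟩
  refine eLpNorm_le_of_forall_hasCompactSupport volume one_le_two (by norm_num) (by norm_num)
    (by finiteness) (fun g hg h2g => ?_) hf hf2.eLpNorm_ne_top
  have h_sq := eLpNorm_sq_le_eLpNorm_mul_eLpNorm_fderiv volume hg h2g hp
  rw [show ((2 : ℝ≥0) : ℝ≥0∞) * 2 = 4 by norm_num] at h_sq
  rw [eLpNorm_norm, ← ENNReal.mul_rpow_of_nonneg _ _ (by norm_num),
    ← ENNReal.mul_rpow_of_nonneg _ _ (by norm_num), one_div, ENNReal.le_rpow_inv_iff two_pos,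
    ENNReal.rpow_two]
  exact h_sq.trans (by gcongr; exact le_self_add)
end
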